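/- Let C be a bivariate copula admitting a tail dependence function Λ, with maximal tail dependence coefficient χ̄ = sup_{b ∈ (0,∞)} Λ(b,1/b), maximal intermediate tail dependence coefficient χ̄* = χ̄ / sup{ min(a,1/a) : a ∈ argmax_{b ∈ (0,∞)} Λ(b,1/b) }, and maximal tail dependence measure λ̄ = sup_μ λ_μ(C) over all tail generating measures μ. Then: (1) if Λ(1,1) = 0, then χ̄ = χ̄* = λ̄ = 0; (2) if at least one of χ̄, χ̄*, λ̄ is zero, then Λ(1,1) = 0; (3) if Λ(1,1) = 1, then χ̄ = χ̄* = λ̄ = 1; and (4) if χ̄ = 1, then Λ(1,1) = 1. -/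

import Mathlib

open MeasureTheory Filter Set

/-- A bivariate copula: `C : [0,1]² → [0,1]` with the grounded/marginal conditions and
the 2-increasing property. -/
def IsCopula (C : ℝ → ℝ → ℝ) : Prop :=
  (∀ u ∈ Icc (0:ℝ) 1, ∀ v ∈ Icc (0:ℝ) 1, C u v ∈ Icc (0:ℝ) 1) ∧
  (∀ u ∈ Icc (0:ℝ) 1, C u 0 = 0 ∧ C 0 u = 0 ∧ C u 1 = u ∧ C 1 u = u) ∧
  (∀ u u' v v' : ℝ, u ∈ Icc (0:ℝ) 1 → u' ∈ Icc (0:ℝ) 1 →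
    v ∈ Icc (0:ℝ) 1 → v' ∈ Icc (0:ℝ) 1 → u ≤ u' → v ≤ v' →
    0 ≤ C u' v' - C u' v - C u v' + C u v)

/-- `Λ` is the tail dependence function of `C`:
`Λ(u,v) = lim_{p↓0} C(pu,pv)/p` for every `(u,v) ∈ [0,∞)²`. -/
def HasTDF (C Λ : ℝ → ℝ → ℝ) : Prop :=
  ∀ u v : ℝ, 0 ≤ u → 0 ≤ v →
    Tendsto (fun p : ℝ => C (p * u) (p * v) / p)
      (nhdsWithin (0:ℝ) (Ioi 0)) (nhds (Λ u v))

/-- A tail generating measure: a Borel probability measure on `[0,1]²` whose mass is not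
concentrated on `{u = 0} ∪ {v = 0}`. -/
def IsTailGenMeasure (μ : Measure (ℝ × ℝ)) : Prop :=
  IsProbabilityMeasure μ ∧
  μ ((Icc (0:ℝ) 1 ×ˢ Icc (0:ℝ) 1)ᶜ) = 0 ∧
  μ {q : ℝ × ℝ | q.1 = 0 ∨ q.2 = 0} < 1

/-- The μ-tail dependence measure: `λ_μ = (∫ Λ dμ) / (∫ min dμ)`, applied to
the tail dependence function `Λ` of the copula. -/
noncomputable def tdm (Λ : ℝ → ℝ → ℝ) (μ : Measure (ℝ × ℝ)) : ℝ :=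
  (∫ q, Λ q.1 q.2 ∂μ) / (∫ q : ℝ × ℝ, min q.1 q.2 ∂μ)

/-!
The tail dependence function inherits from the copula the bounds `0 ≤ Λ(u,v) ≤ min(u,v)`,
monotonicity, the Lipschitz bound `|ΔΛ| ≤ |Δu| + |Δv|` and homogeneity; so `Λ(1,1) = 0` forces
`Λ ≡ 0`, and every `λ_μ` lies in `[0,1]`. The value `Λ(1,1)` is attained both by `b = 1` and by
the Dirac mass at `(1,1)`. When `Λ(1,1) > 0`, the continuous map `b ↦ Λ(b,1/b)` is bounded by
`min(b,1/b) < Λ(1,1)` outside a compact interval, so it attains its supremum at some `a`; if that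
supremum is `1`, then `min(a,1/a) ≥ 1` forces `a = 1`.
-/

open Topology

namespace IsCopula

variable {C : ℝ → ℝ → ℝ}

lemma swap (hC : IsCopula C) : IsCopula (fun u v => C v u) := by
  refine ⟨fun u hu v hv => hC.1 v hv u hu, fun u hu => ?_, ?_⟩
  · obtain ⟨h0, h0', h1, h1'⟩ := hC.2.1 u hu
    exact ⟨h0', h0, h1', h1⟩
  · intro u u' v v' hu hu' hv hv' huu hvv
    linarith [hC.2.2 v v' u u' hv hv' hu hu' hvv huu]

lemma mono_left (hC : IsCopula C) {u u' v : ℝ} (hu : u ∈ Icc (0:ℝ) 1) (hu' : u' ∈ Icc (0:ℝ) 1)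
    (hv : v ∈ Icc (0:ℝ) 1) (h : u ≤ u') : C u v ≤ C u' v := by
  linarith [hC.2.2 u u' 0 v hu hu' (left_mem_Icc.2 zero_le_one) hv h hv.1,
    (hC.2.1 u hu).1, (hC.2.1 u' hu').1]

lemma sub_le_left (hC : IsCopula C) {u u' v : ℝ} (hu : u ∈ Icc (0:ℝ) 1)
    (hu' : u' ∈ Icc (0:ℝ) 1) (hv : v ∈ Icc (0:ℝ) 1) (h : u ≤ u') : C u' v - C u v ≤ u' - u := by
  linarith [hC.2.2 u u' v 1 hu hu' hv (right_mem_Icc.2 zero_le_one) h hv.2,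
    (hC.2.1 u hu).2.2.1, (hC.2.1 u' hu').2.2.1]

lemma abs_sub_le_left (hC : IsCopula C) {u u' v : ℝ} (hu : u ∈ Icc (0:ℝ) 1)
    (hu' : u' ∈ Icc (0:ℝ) 1) (hv : v ∈ Icc (0:ℝ) 1) : |C u v - C u' v| ≤ |u - u'| := by
  rcases le_total u u' with h | h
  · rw [abs_sub_comm, abs_sub_comm u, abs_of_nonneg (sub_nonneg.2 (hC.mono_left hu hu' hv h)),
      abs_of_nonneg (sub_nonneg.2 h)]
    exact hC.sub_le_left hu hu' hv h
  · rw [abs_of_nonneg (sub_nonneg.2 (hC.mono_left hu' hu hv h)), abs_of_nonneg (sub_nonneg.2 h)]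
    exact hC.sub_le_left hu' hu hv h

lemma mono (hC : IsCopula C) {u u' v v' : ℝ} (hu : u ∈ Icc (0:ℝ) 1) (hu' : u' ∈ Icc (0:ℝ) 1)
    (hv : v ∈ Icc (0:ℝ) 1) (hv' : v' ∈ Icc (0:ℝ) 1) (huu : u ≤ u') (hvv : v ≤ v') :
    C u v ≤ C u' v' :=
  (hC.mono_left hu hu' hv huu).trans (hC.swap.mono_left hv hv' hu' hvv)

lemma le_min (hC : IsCopula C) {u v : ℝ} (hu : u ∈ Icc (0:ℝ) 1) (hv : v ∈ Icc (0:ℝ) 1) :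
    C u v ≤ min u v := by
  have h1 : (1:ℝ) ∈ Icc (0:ℝ) 1 := right_mem_Icc.2 zero_le_one
  refine _root_.le_min ?_ ?_
  · simpa [(hC.2.1 u hu).2.2.1] using hC.mono hu hu hv h1 le_rfl hv.2
  · simpa [(hC.2.1 v hv).2.2.2] using hC.mono hu h1 hv hv hu.2 le_rfl

lemma abs_sub_le (hC : IsCopula C) {u u' v v' : ℝ} (hu : u ∈ Icc (0:ℝ) 1)
    (hu' : u' ∈ Icc (0:ℝ) 1) (hv : v ∈ Icc (0:ℝ) 1) (hv' : v' ∈ Icc (0:ℝ) 1) :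
    |C u v - C u' v'| ≤ |u - u'| + |v - v'| :=
  calc |C u v - C u' v'| ≤ |C u v - C u' v| + |C u' v - C u' v'| := _root_.abs_sub_le _ _ _
    _ ≤ |u - u'| + |v - v'| :=
      add_le_add (hC.abs_sub_le_left hu hu' hv) (hC.swap.abs_sub_le_left hv hv' hu')

end IsCopula

lemma eventually_mul_mem_Icc {r : ℝ} (hr : 0 ≤ r) :
    ∀ᶠ p in 𝓝[>] (0:ℝ), p * r ∈ Icc (0:ℝ) 1 := by
  have hlim : Tendsto (fun p : ℝ => p * r) (𝓝[>] 0) (𝓝 0) := by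
    simpa using (tendsto_id.mul_const r).mono_left (nhdsWithin_le_nhds (a := (0:ℝ)))
  filter_upwards [self_mem_nhdsWithin, hlim.eventually (Iio_mem_nhds one_pos)] with p hp h
  exact ⟨mul_nonneg (le_of_lt hp) hr, le_of_lt h⟩

namespace HasTDF

variable {C Λ : ℝ → ℝ → ℝ}

lemma eventually_mem_Icc {u v : ℝ} (hu : 0 ≤ u) (hv : 0 ≤ v) :
    ∀ᶠ p in 𝓝[>] (0:ℝ), 0 < p ∧ p * u ∈ Icc (0:ℝ) 1 ∧ p * v ∈ Icc (0:ℝ) 1 :=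
  eventually_mem_nhdsWithin.and ((eventually_mul_mem_Icc hu).and (eventually_mul_mem_Icc hv))

lemma nonneg (hΛ : HasTDF C Λ) (hC : IsCopula C) {u v : ℝ} (hu : 0 ≤ u) (hv : 0 ≤ v) :
    0 ≤ Λ u v := by
  refine ge_of_tendsto (hΛ u v hu hv) ?_
  filter_upwards [eventually_mem_Icc hu hv] with p ⟨hp, hpu, hpv⟩
  exact div_nonneg (hC.1 _ hpu _ hpv).1 hp.le

lemma le_min (hΛ : HasTDF C Λ) (hC : IsCopula C) {u v : ℝ} (hu : 0 ≤ u) (hv : 0 ≤ v) :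
    Λ u v ≤ min u v := by
  refine le_of_tendsto (hΛ u v hu hv) ?_
  filter_upwards [eventually_mem_Icc hu hv] with p ⟨hp, hpu, hpv⟩
  rw [div_le_iff₀ hp, mul_comm (min u v), mul_min_of_nonneg _ _ hp.le]
  exact hC.le_min hpu hpv

lemma mono (hΛ : HasTDF C Λ) (hC : IsCopula C) {u u' v v' : ℝ} (hu : 0 ≤ u) (hv : 0 ≤ v)
    (huu : u ≤ u') (hvv : v ≤ v') : Λ u v ≤ Λ u' v' := by
  have hu' := hu.trans huu
  have hv' := hv.trans hvv
  refine le_of_tendsto_of_tendsto (hΛ u v hu hv) (hΛ u' v' hu' hv') ?_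
  filter_upwards [eventually_mem_Icc hu hv, eventually_mem_Icc hu' hv'] with
    p ⟨hp, hpu, hpv⟩ ⟨_, hpu', hpv'⟩
  gcongr
  exact hC.mono hpu hpu' hpv hpv' (by gcongr) (by gcongr)

lemma abs_sub_le (hΛ : HasTDF C Λ) (hC : IsCopula C) {u u' v v' : ℝ} (hu : 0 ≤ u) (hu' : 0 ≤ u')
    (hv : 0 ≤ v) (hv' : 0 ≤ v') : |Λ u v - Λ u' v'| ≤ |u - u'| + |v - v'| := by
  refine le_of_tendsto (((hΛ u v hu hv).sub (hΛ u' v' hu' hv')).abs) ?_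
  filter_upwards [eventually_mem_Icc hu hv, eventually_mem_Icc hu' hv'] with
    p ⟨hp, hpu, hpv⟩ ⟨_, hpu', hpv'⟩
  rw [← sub_div, abs_div, abs_of_pos hp, div_le_iff₀ hp]
  calc |C (p * u) (p * v) - C (p * u') (p * v')| ≤ |p * u - p * u'| + |p * v - p * v'| :=
        hC.abs_sub_le hpu hpu' hpv hpv'
    _ = (|u - u'| + |v - v'|) * p := by
        rw [← mul_sub, ← mul_sub, abs_mul, abs_mul, abs_of_pos hp]; ring

lemma apply_mul_mul (hΛ : HasTDF C Λ) {t u v : ℝ} (ht : 0 < t) (hu : 0 ≤ u) (hv : 0 ≤ v) :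
    Λ (t * u) (t * v) = t * Λ u v := by
  have hscale : Tendsto (t * ·) (𝓝[>] (0:ℝ)) (𝓝[>] 0) := by
    simpa only [comap_mulLeft_nhdsGT_zero ht] using tendsto_comap (f := (t * ·)) (x := 𝓝[>] 0)
  refine tendsto_nhds_unique (hΛ (t * u) (t * v) (by positivity) (by positivity)) ?_
  refine (((hΛ u v hu hv).comp hscale).const_mul t).congr' ?_
  filter_upwards [self_mem_nhdsWithin] with p hp
  simp only [Function.comp_apply]
  field_simp [ht.ne', (show (0:ℝ) < p from hp).ne']

lemma eq_zero_of_apply_one_one (hΛ : HasTDF C Λ) (hC : IsCopula C) (h0 : Λ 1 1 = 0) {u v : ℝ}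
    (hu : 0 ≤ u) (hv : 0 ≤ v) : Λ u v = 0 := by
  set M := max (max u v) 1
  have hM : 0 < M := zero_lt_one.trans_le (le_max_right _ _)
  have hle : Λ u v ≤ Λ M M := hΛ.mono hC hu hv
    ((le_max_left u v).trans (le_max_left _ _)) ((le_max_right u v).trans (le_max_left _ _))
  rw [← mul_one M, hΛ.apply_mul_mul hM zero_le_one zero_le_one, h0, mul_zero] at hle
  exact hle.antisymm (hΛ.nonneg hC hu hv)

lemma continuousOn (hΛ : HasTDF C Λ) (hC : IsCopula C) :
    ContinuousOn (Function.uncurry Λ) (Ici 0 ×ˢ Ici 0) := by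
  refine (LipschitzOnWith.of_dist_le_mul (K := 2) fun q hq q' hq' => ?_).continuousOn
  rw [Real.dist_eq, Prod.dist_eq, Real.dist_eq, Real.dist_eq]
  have := hΛ.abs_sub_le hC hq.1 hq'.1 hq.2 hq'.2
  change |Λ q.1 q.2 - Λ q'.1 q'.2| ≤ _
  push_cast
  linarith [le_max_left |q.1 - q'.1| |q.2 - q'.2|, le_max_right |q.1 - q'.1| |q.2 - q'.2|]

lemma continuousOn_one_div (hΛ : HasTDF C Λ) (hC : IsCopula C) :
    ContinuousOn (fun b => Λ b (1 / b)) (Ioi 0) :=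
  (hΛ.continuousOn hC).comp (f := fun b : ℝ => (b, 1 / b))
    (continuousOn_id.prodMk (continuousOn_const.div continuousOn_id fun _ hb => ne_of_gt hb))
    fun b (hb : 0 < b) => ⟨hb.le, (one_div_pos.2 hb).le⟩

end HasTDF

lemma min_self_one_div_le_one {b : ℝ} (hb : 0 < b) : min b (1 / b) ≤ 1 := by
  rcases le_total b 1 with h | h
  · exact (min_le_left _ _).trans h
  · exact (min_le_right _ _).trans ((div_le_one hb).2 h)

lemma eq_one_of_one_le_min_one_div {a : ℝ} (ha : 0 < a) (h : 1 ≤ min a (1 / a)) : a = 1 := by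
  obtain ⟨h1, h2⟩ := le_min_iff.1 h
  rw [le_div_iff₀ ha, one_mul] at h2
  exact le_antisymm h2 h1

lemma exists_forall_le_of_le_min_one_div {f : ℝ → ℝ} (hf : ContinuousOn f (Ioi 0))
    (hle : ∀ b, 0 < b → f b ≤ min b (1 / b)) (h1 : 0 < f 1) :
    ∃ a, 0 < a ∧ ∀ b, 0 < b → f b ≤ f a := by
  have hK : Icc (f 1) (1 / f 1) ⊆ Ioi 0 := fun x hx => h1.trans_le hx.1
  have h1K : (1:ℝ) ∈ Icc (f 1) (1 / f 1) := by
    have hc1 : f 1 ≤ 1 := by simpa using hle 1 one_pos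
    exact ⟨hc1, by rwa [le_div_iff₀ h1, one_mul]⟩
  obtain ⟨a, haK, hmax⟩ := isCompact_Icc.exists_isMaxOn ⟨1, h1K⟩ (hf.mono hK)
  refine ⟨a, hK haK, fun b hb => ?_⟩
  by_cases hbK : b ∈ Icc (f 1) (1 / f 1)
  · exact hmax hbK
  have hbmin : min b (1 / b) < f 1 := by
    rcases not_and_or.1 hbK with h | h
    · exact min_lt_of_left_lt (not_le.1 h)
    · exact min_lt_of_right_lt ((one_div_lt h1 hb).1 (not_le.1 h))
  linarith [hle b hb, show f 1 ≤ f a from hmax h1K]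

namespace IsTailGenMeasure

variable {μ : Measure (ℝ × ℝ)}

lemma ae_mem (hμ : IsTailGenMeasure μ) : ∀ᵐ q ∂μ, q ∈ Icc (0:ℝ) 1 ×ˢ Icc (0:ℝ) 1 :=
  mem_ae_iff.2 hμ.2.1

lemma integrable_min (hμ : IsTailGenMeasure μ) : Integrable (fun q : ℝ × ℝ => min q.1 q.2) μ := by
  have := hμ.1
  refine Integrable.of_bound (continuous_fst.min continuous_snd).aestronglyMeasurable 1 ?_
  filter_upwards [hμ.ae_mem] with q ⟨⟨h1, h1'⟩, h2, _⟩
  rw [Real.norm_eq_abs, abs_of_nonneg (le_min h1 h2)]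
  exact (min_le_left _ _).trans h1'

end IsTailGenMeasure

lemma isTailGenMeasure_dirac_one_one : IsTailGenMeasure (Measure.dirac ((1:ℝ), (1:ℝ))) :=
  ⟨inferInstance, by simp, by simp⟩

lemma tdm_dirac_one_one (Λ : ℝ → ℝ → ℝ) : tdm Λ (Measure.dirac ((1:ℝ), (1:ℝ))) = Λ 1 1 := by
  simp [tdm]

namespace HasTDF

variable {C Λ : ℝ → ℝ → ℝ} {μ : Measure (ℝ × ℝ)}

lemma tdm_le_one (hΛ : HasTDF C Λ) (hC : IsCopula C) (hμ : IsTailGenMeasure μ) :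
    tdm Λ μ ≤ 1 := by
  have hnonneg : 0 ≤ᵐ[μ] fun q => Λ q.1 q.2 :=
    hμ.ae_mem.mono fun q hq => hΛ.nonneg hC hq.1.1 hq.2.1
  have hle : (fun q => Λ q.1 q.2) ≤ᵐ[μ] fun q => min q.1 q.2 :=
    hμ.ae_mem.mono fun q hq => hΛ.le_min hC hq.1.1 hq.2.1
  have hint_le := integral_mono_of_nonneg hnonneg hμ.integrable_min hle
  exact div_le_one_of_le₀ hint_le ((integral_nonneg_of_ae hnonneg).trans hint_le)

lemma tdm_eq_zero (hΛ : HasTDF C Λ) (hC : IsCopula C) (hμ : IsTailGenMeasure μ)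
    (h0 : Λ 1 1 = 0) : tdm Λ μ = 0 := by
  have : (fun q => Λ q.1 q.2) =ᵐ[μ] fun _ => 0 :=
    hμ.ae_mem.mono fun q hq => hΛ.eq_zero_of_apply_one_one hC h0 hq.1.1 hq.2.1
  rw [tdm, integral_congr_ae this, integral_zero, zero_div]

end HasTDF

-- In the paper's notation: `maxTailDepCoeff Λ = χ̄`, `maxTailDepMeasure Λ = λ̄`, and
-- `χ̄* = maxTailDepCoeff Λ / sSupMinArgmax Λ`.
noncomputable def maxTailDepCoeff (Λ : ℝ → ℝ → ℝ) : ℝ :=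
  sSup {x : ℝ | ∃ b : ℝ, 0 < b ∧ x = Λ b (1 / b)}

def maxTailDepArgmax (Λ : ℝ → ℝ → ℝ) : Set ℝ :=
  {a : ℝ | 0 < a ∧ ∀ b : ℝ, 0 < b → Λ b (1 / b) ≤ Λ a (1 / a)}

noncomputable def sSupMinArgmax (Λ : ℝ → ℝ → ℝ) : ℝ :=
  sSup {x : ℝ | ∃ a ∈ maxTailDepArgmax Λ, x = min a (1 / a)}

noncomputable def maxTailDepMeasure (Λ : ℝ → ℝ → ℝ) : ℝ :=
  sSup {x : ℝ | ∃ μ : Measure (ℝ × ℝ), IsTailGenMeasure μ ∧ x = tdm Λ μ}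

lemma maxTailDepCoeff_eq_of_mem_argmax {Λ : ℝ → ℝ → ℝ} {a : ℝ} (ha : a ∈ maxTailDepArgmax Λ) :
    maxTailDepCoeff Λ = Λ a (1 / a) :=
  IsGreatest.csSup_eq ⟨⟨a, ha.1, rfl⟩, by rintro _ ⟨b, hb, rfl⟩; exact ha.2 b hb⟩

lemma one_mem_upperBounds_min_one_div {s : Set ℝ} (hs : ∀ a ∈ s, 0 < a) :
    1 ∈ upperBounds {x : ℝ | ∃ a ∈ s, x = min a (1 / a)} := by
  rintro _ ⟨a, ha, rfl⟩
  exact min_self_one_div_le_one (hs a ha)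

namespace HasTDF

variable {C Λ : ℝ → ℝ → ℝ}

lemma maxTailDepArgmax_nonempty (hΛ : HasTDF C Λ) (hC : IsCopula C) (h : 0 < Λ 1 1) :
    (maxTailDepArgmax Λ).Nonempty := by
  obtain ⟨a, ha, hmax⟩ := exists_forall_le_of_le_min_one_div (hΛ.continuousOn_one_div hC)
    (fun b hb => hΛ.le_min hC hb.le (one_div_pos.2 hb).le) (by simpa using h)
  exact ⟨a, ha, hmax⟩

lemma one_mem_maxTailDepArgmax (hΛ : HasTDF C Λ) (hC : IsCopula C) (h : Λ 1 1 = 0 ∨ Λ 1 1 = 1) :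
    1 ∈ maxTailDepArgmax Λ := by
  refine ⟨one_pos, fun b hb => ?_⟩
  rw [div_one]
  rcases h with h0 | h1
  · rw [hΛ.eq_zero_of_apply_one_one hC h0 hb.le (one_div_pos.2 hb).le, h0]
  · rw [h1]
    exact (hΛ.le_min hC hb.le (one_div_pos.2 hb).le).trans (min_self_one_div_le_one hb)

lemma maxTailDepCoeff_eq_apply_one_one (hΛ : HasTDF C Λ) (hC : IsCopula C)
    (h : Λ 1 1 = 0 ∨ Λ 1 1 = 1) : maxTailDepCoeff Λ = Λ 1 1 := by
  rw [maxTailDepCoeff_eq_of_mem_argmax (hΛ.one_mem_maxTailDepArgmax hC h), div_one]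

lemma one_one_le_maxTailDepCoeff (hΛ : HasTDF C Λ) (hC : IsCopula C) :
    Λ 1 1 ≤ maxTailDepCoeff Λ := by
  refine le_csSup ⟨1, ?_⟩ ⟨1, one_pos, by rw [div_one]⟩
  rintro _ ⟨b, hb, rfl⟩
  exact (hΛ.le_min hC hb.le (one_div_pos.2 hb).le).trans (min_self_one_div_le_one hb)

lemma eq_one_of_maxTailDepCoeff_eq_one (hΛ : HasTDF C Λ) (hC : IsCopula C)
    (h : maxTailDepCoeff Λ = 1) : Λ 1 1 = 1 := by
  have hpos : 0 < Λ 1 1 := (hΛ.nonneg hC zero_le_one zero_le_one).lt_of_ne' fun h0 => by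
    rw [hΛ.maxTailDepCoeff_eq_apply_one_one hC (.inl h0), h0] at h
    exact zero_ne_one h
  obtain ⟨a, ha⟩ := hΛ.maxTailDepArgmax_nonempty hC hpos
  have hchi := maxTailDepCoeff_eq_of_mem_argmax ha
  obtain rfl : a = 1 := eq_one_of_one_le_min_one_div ha.1
    ((h.symm.trans hchi).trans_le (hΛ.le_min hC ha.1.le (one_div_pos.2 ha.1).le))
  rwa [hchi, div_one] at h

lemma sSupMinArgmax_pos (hΛ : HasTDF C Λ) (hC : IsCopula C) (h : 0 < Λ 1 1) :
    0 < sSupMinArgmax Λ := by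
  obtain ⟨a, ha⟩ := hΛ.maxTailDepArgmax_nonempty hC h
  exact (lt_min ha.1 (one_div_pos.2 ha.1)).trans_le
    (le_csSup ⟨1, one_mem_upperBounds_min_one_div fun a ha => ha.1⟩ ⟨a, ha, rfl⟩)

lemma sSupMinArgmax_eq_one (hΛ : HasTDF C Λ) (hC : IsCopula C) (h : Λ 1 1 = 1) :
    sSupMinArgmax Λ = 1 :=
  IsGreatest.csSup_eq ⟨⟨1, hΛ.one_mem_maxTailDepArgmax hC (.inr h), by norm_num⟩,
    one_mem_upperBounds_min_one_div fun a ha => ha.1⟩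

lemma maxTailDepMeasure_le_one (hΛ : HasTDF C Λ) (hC : IsCopula C) : maxTailDepMeasure Λ ≤ 1 :=
  Real.sSup_le (by rintro _ ⟨μ, hμ, rfl⟩; exact hΛ.tdm_le_one hC hμ) zero_le_one

lemma one_one_le_maxTailDepMeasure (hΛ : HasTDF C Λ) (hC : IsCopula C) :
    Λ 1 1 ≤ maxTailDepMeasure Λ :=
  le_csSup ⟨1, by rintro _ ⟨μ, hμ, rfl⟩; exact hΛ.tdm_le_one hC hμ⟩
    ⟨_, isTailGenMeasure_dirac_one_one, (tdm_dirac_one_one Λ).symm⟩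

lemma maxTailDepMeasure_eq_zero (hΛ : HasTDF C Λ) (hC : IsCopula C) (h0 : Λ 1 1 = 0) :
    maxTailDepMeasure Λ = 0 := by
  refine IsGreatest.csSup_eq ⟨⟨_, isTailGenMeasure_dirac_one_one, ?_⟩, ?_⟩
  · rw [tdm_dirac_one_one, h0]
  · rintro _ ⟨μ, hμ, rfl⟩
    exact (hΛ.tdm_eq_zero hC hμ h0).le

end HasTDF

theorem maximal_tail_dependence_degenerate_cases (C Λ : ℝ → ℝ → ℝ)
    (hC : IsCopula C) (hΛ : HasTDF C Λ) :
    let chiBar : ℝ := sSup {x : ℝ | ∃ b : ℝ, 0 < b ∧ x = Λ b (1 / b)}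
    let A : Set ℝ := {a : ℝ | 0 < a ∧ ∀ b : ℝ, 0 < b → Λ b (1 / b) ≤ Λ a (1 / a)}
    let mBar : ℝ := sSup {x : ℝ | ∃ a ∈ A, x = min a (1 / a)}
    let chiStar : ℝ := chiBar / mBar
    let lamBar : ℝ := sSup {x : ℝ | ∃ μ : Measure (ℝ × ℝ), IsTailGenMeasure μ ∧ x = tdm Λ μ}
    (Λ 1 1 = 0 → chiBar = 0 ∧ chiStar = 0 ∧ lamBar = 0) ∧
    ((chiBar = 0 ∨ chiStar = 0 ∨ lamBar = 0) → Λ 1 1 = 0) ∧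
    (Λ 1 1 = 1 → chiBar = 1 ∧ chiStar = 1 ∧ lamBar = 1) ∧
    (chiBar = 1 → Λ 1 1 = 1) := by
  intro chiBar A mBar chiStar lamBar
  refine ⟨fun h0 => ?_, fun h => ?_, fun h1 => ?_, hΛ.eq_one_of_maxTailDepCoeff_eq_one hC⟩
  · have hchi : chiBar = 0 := (hΛ.maxTailDepCoeff_eq_apply_one_one hC (.inl h0)).trans h0
    exact ⟨hchi, by simp [chiStar, hchi], hΛ.maxTailDepMeasure_eq_zero hC h0⟩
  · by_contra h0
    have hpos := (hΛ.nonneg hC zero_le_one zero_le_one).lt_of_ne' h0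
    have hchi : 0 < chiBar := hpos.trans_le (hΛ.one_one_le_maxTailDepCoeff hC)
    have hm : 0 < mBar := hΛ.sSupMinArgmax_pos hC hpos
    have hlam : 0 < lamBar := hpos.trans_le (hΛ.one_one_le_maxTailDepMeasure hC)
    rcases h with h | h | h
    exacts [hchi.ne' h, (div_pos hchi hm).ne' h, hlam.ne' h]
  · have hchi : chiBar = 1 := (hΛ.maxTailDepCoeff_eq_apply_one_one hC (.inr h1)).trans h1
    have hm : mBar = 1 := hΛ.sSupMinArgmax_eq_one hC h1
    exact ⟨hchi, by simp [chiStar, hchi, hm],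
      (hΛ.maxTailDepMeasure_le_one hC).antisymm (h1 ▸ hΛ.one_one_le_maxTailDepMeasure hC)⟩
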